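/- arXiv:2112.12734 — 3 statements merged into one kernel-verified Lean document; each statement's English description precedes it below -/
import Mathlib

section
/- There exists N₀ ∈ ℕ such that for every natural number N ≥ N₀ and all integers n, j satisfying either (|n| ≤ N² and |j| ≥ N⁶) or (|n| ≥ N² and |j| ≤ N⁶), the number of ordered pairs (n₁, n₂) ∈ ℤ² with |n₁| ≤ N and |n₂| ≤ N satisfying P(n₁) + P(n₂) + P(n − n₁ − n₂) = j is at most 3. -/
open scoped BigOperators

/-- Dispersion relation of the linearized 1D periodic Dysthe equation. -/
def P (n : ℤ) : ℤ := n ^ 3 - 2 * n ^ 2 + 8 * n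

/-- `rcount N n j` is the number of ordered pairs `(n₁, n₂) ∈ ℤ²` with
`|n₁| ≤ N`, `|n₂| ≤ N` satisfying `P n₁ + P n₂ + P (n - n₁ - n₂) = j`. -/
noncomputable def rcount (N : ℕ) (n j : ℤ) : ℕ :=
  ((Finset.Icc (-(N : ℤ)) (N : ℤ) ×ˢ Finset.Icc (-(N : ℤ)) (N : ℤ)).filter
    (fun q => P q.1 + P q.2 + P (n - q.1 - q.2) = j)).card

/-!
Write `m = n - n₁ - n₂` for the third frequency of a solution. In both regimes `|m| ≥ N² - 2N`:
in the second one by the triangle inequality, in the first one because otherwise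
`|j| ≤ |P n₁| + |P n₂| + |P m| < N⁶`. Near such `m` the consecutive gaps
`P (m + 1) - P m = 3m² - m + 7` of the increasing cubic `P` are of size `N⁴`, while
`P m = j - P n₁ - P n₂` is pinned down by `j` up to `O(N³)`; so `m`, and hence `s = n₁ + n₂`, is
the same for all solutions. Finally `P n₁ + P n₂ = P s + n₁ n₂ (4 - 3s)` with `4 - 3s ≠ 0`
fixes `n₁ n₂`, so `{n₁, n₂}` is determined and there are at most two ordered solutions.
-/

lemma P_add_P (a b : ℤ) : P a + P b = P (a + b) + a * b * (4 - 3 * (a + b)) := by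
  unfold P; ring

lemma P_add_one_sub_P (m : ℤ) : P (m + 1) - P m = 3 * m ^ 2 - m + 7 := by
  unfold P; ring

lemma P_strictMono : StrictMono P :=
  strictMono_int_of_lt_succ fun m => by nlinarith [P_add_one_sub_P m, sq_nonneg (6 * m - 1)]

lemma abs_P_le {a B : ℤ} (h : |a| ≤ B) : |P a| ≤ B ^ 3 + 2 * B ^ 2 + 8 * B := by
  calc |P a| ≤ |a| ^ 3 + 2 * |a| ^ 2 + 8 * |a| := by
        unfold P
        refine (abs_add_le _ _).trans (add_le_add ((abs_sub _ _).trans (le_of_eq ?_)) ?_)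
        · simp [abs_mul, abs_pow]
        · simp [abs_mul]
    _ ≤ B ^ 3 + 2 * B ^ 2 + 8 * B := by gcongr

lemma eq_of_abs_P_sub_P_lt {K m m' : ℤ} (hK : 0 ≤ K) (hm : K ≤ |m|) (hm' : K ≤ |m'|)
    (h : |P m - P m'| < 3 * K ^ 2 - K + 7) : m = m' := by
  wlog hlt : m < m' generalizing m m'
  · rcases (not_lt.mp hlt).eq_or_lt with heq | hgt
    · exact heq.symm
    · exact (this hm' hm (abs_sub_comm (P m) (P m') ▸ h) hgt).symm
  have hgap : P (m + 1) ≤ P m' := P_strictMono.monotone hlt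
  have hquad : 3 * K ^ 2 - K ≤ 3 * m ^ 2 - m := by
    rw [← sq_abs m]
    rcases hm.eq_or_lt with heq | hgt
    · rw [← heq]; linarith [le_abs_self m]
    · nlinarith [le_abs_self m]
  rw [abs_sub_comm, abs_of_pos (sub_pos.mpr (P_strictMono hlt))] at h
  linarith [P_add_one_sub_P m]

lemma abs_P_add_P_sub_P_add_P_le {N a b a' b' : ℤ} (ha : |a| ≤ N) (hb : |b| ≤ N)
    (ha' : |a'| ≤ N) (hb' : |b'| ≤ N) :
    |(P a + P b) - (P a' + P b')| ≤ 4 * (N ^ 3 + 2 * N ^ 2 + 8 * N) := by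
  have := abs_sub (P a + P b) (P a' + P b')
  have := abs_add_le (P a) (P b)
  have := abs_add_le (P a') (P b')
  linarith [abs_P_le ha, abs_P_le hb, abs_P_le ha', abs_P_le hb']

lemma mul_eq_mul_of_add_eq_of_P_add_P_eq {a b a' b' : ℤ} (hs : a + b = a' + b')
    (hP : P a + P b = P a' + P b') : a * b = a' * b' := by
  rw [P_add_P, P_add_P a', ← hs] at hP
  have hne : 4 - 3 * (a + b) ≠ 0 := by omega
  exact mul_right_cancel₀ hne (by linarith)

lemma Prod.eq_or_eq_swap_of_add_eq_of_mul_eq {R : Type*} [CommRing R] [NoZeroDivisors R]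
    {p q : R × R} (hs : q.1 + q.2 = p.1 + p.2) (hp : q.1 * q.2 = p.1 * p.2) :
    q = p ∨ q = p.swap := by
  have hroot : (q.1 - p.1) * (q.1 - p.2) = 0 := by linear_combination q.1 * hs - hp
  rcases mul_eq_zero.mp hroot with h | h
  · left
    ext
    · linear_combination h
    · linear_combination hs - h
  · right
    ext
    · simpa [sub_eq_zero] using h
    · simp only [Prod.snd_swap]; linear_combination hs - h

lemma Finset.card_le_two_of_forall_eq_or_eq_swap {α : Type*} [DecidableEq α] {s : Finset (α × α)}
    (h : ∀ p ∈ s, ∀ q ∈ s, q = p ∨ q = p.swap) : s.card ≤ 2 := by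
  obtain rfl | ⟨p, hp⟩ := s.eq_empty_or_nonempty
  · simp
  · have hsub : s ⊆ {p, p.swap} := fun q hq => by simpa using h p hp q hq
    exact (card_le_card hsub).trans card_le_two

section Regime

variable {N : ℕ} {n j a b : ℤ}

lemma le_abs_sub_sub_of_regime (hN : 3 ≤ N) (ha : |a| ≤ N) (hb : |b| ≤ N)
    (he : P a + P b + P (n - a - b) = j)
    (hreg : (|n| ≤ (N : ℤ) ^ 2 ∧ (N : ℤ) ^ 6 ≤ |j|) ∨ ((N : ℤ) ^ 2 ≤ |n| ∧ |j| ≤ (N : ℤ) ^ 6)) :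
    (N : ℤ) ^ 2 - 2 * N ≤ |n - a - b| := by
  have hN' : (3 : ℤ) ≤ N := by exact_mod_cast hN
  rcases hreg with ⟨-, hj⟩ | ⟨hn, -⟩
  · by_contra! hsmall
    have hm := abs_P_le hsmall.le
    have hj' : |j| ≤ |P a| + |P b| + |P (n - a - b)| := by
      rw [← he]; exact (abs_add_le _ _).trans (by linarith [abs_add_le (P a) (P b)])
    have hexpand : (N : ℤ) ^ 6 - ((N ^ 2 - 2 * N) ^ 3 + 2 * (N ^ 2 - 2 * N) ^ 2 + 8 * (N ^ 2 - 2 * N))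
        - 2 * (N ^ 3 + 2 * N ^ 2 + 8 * N) = (N : ℤ) ^ 2 * (6 * N ^ 3 - 14 * N ^ 2 + 14 * N - 20) := by
      ring
    have hpos : 0 < (N : ℤ) ^ 2 * (6 * N ^ 3 - 14 * N ^ 2 + 14 * N - 20) := by
      have : 0 < 6 * (N : ℤ) ^ 3 - 14 * N ^ 2 + 14 * N - 20 := by nlinarith
      positivity
    linarith [abs_P_le ha, abs_P_le hb]
  · have h := abs_sub_abs_le_abs_sub n (a + b)
    rw [← sub_sub] at h
    linarith [abs_add_le a b]

lemma add_eq_add_of_regime (hN : 6 ≤ N) {a' b' : ℤ}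
    (ha : |a| ≤ N) (hb : |b| ≤ N) (ha' : |a'| ≤ N) (hb' : |b'| ≤ N)
    (he : P a + P b + P (n - a - b) = j) (he' : P a' + P b' + P (n - a' - b') = j)
    (hreg : (|n| ≤ (N : ℤ) ^ 2 ∧ (N : ℤ) ^ 6 ≤ |j|) ∨ ((N : ℤ) ^ 2 ≤ |n| ∧ |j| ≤ (N : ℤ) ^ 6)) :
    a + b = a' + b' := by
  have hN' : (6 : ℤ) ≤ N := by exact_mod_cast hN
  have hm := le_abs_sub_sub_of_regime (by omega) ha hb he hreg
  have hm' := le_abs_sub_sub_of_regime (by omega) ha' hb' he' hreg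
  have hclose := abs_P_add_P_sub_P_add_P_le ha' hb' ha hb
  rw [show P a' + P b' - (P a + P b) = P (n - a - b) - P (n - a' - b') by linarith] at hclose
  have hgap : 4 * ((N : ℤ) ^ 3 + 2 * N ^ 2 + 8 * N) < 3 * (N ^ 2 - 2 * N) ^ 2 - (N ^ 2 - 2 * N) + 7 := by
    have hcube : 0 ≤ (N : ℤ) ^ 3 * (3 * N - 18) := mul_nonneg (by positivity) (by linarith)
    nlinarith
  have hsame := eq_of_abs_P_sub_P_lt (by nlinarith) hm hm' (hclose.trans_lt hgap)
  linarith

end Regime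

theorem stmt2 :
    ∃ N₀ : ℕ, ∀ (N : ℕ), N₀ ≤ N → ∀ (n j : ℤ),
      ((|n| ≤ (N : ℤ) ^ 2 ∧ (N : ℤ) ^ 6 ≤ |j|) ∨
       ((N : ℤ) ^ 2 ≤ |n| ∧ |j| ≤ (N : ℤ) ^ 6)) →
      rcount N n j ≤ 3 := by
  refine ⟨6, fun N hN n j hreg => ?_⟩
  refine (Finset.card_le_two_of_forall_eq_or_eq_swap fun p hp q hq => ?_).trans (by norm_num)
  simp only [Finset.mem_filter, Finset.mem_product, Finset.mem_Icc, ← abs_le] at hp hq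
  obtain ⟨⟨hp₁, hp₂⟩, hpj⟩ := hp
  obtain ⟨⟨hq₁, hq₂⟩, hqj⟩ := hq
  have hsum := add_eq_add_of_regime hN hq₁ hq₂ hp₁ hp₂ hqj hpj hreg
  have hP : P q.1 + P q.2 = P p.1 + P p.2 := by
    rw [sub_sub, hsum, ← sub_sub] at hqj
    linarith
  exact Prod.eq_or_eq_swap_of_add_eq_of_mul_eq hsum
    (mul_eq_mul_of_add_eq_of_P_add_P_eq hsum hP)
end

section
/- For every integer m ≥ 3 and every ε > 0 there exists a constant C_{ε,m} > 0 such that for every natural number N ≥ 1 and all integers n, j, the number of (m−1)-tuples (n₁, …, n_{m−1}) ∈ ℤ^{m−1} with |n_i| ≤ N for each i and satisfying P(n₁) + P(n₂) + ⋯ + P(n_{m−1}) + P(n − n₁ − n₂ − ⋯ − n_{m−1}) = j is at most C_{ε,m} N^{m−3+ε}. -/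
open scoped BigOperators

/-- `rcountm m N n j` is the number of `(m-1)`-tuples `(n₁, …, n_{m−1}) ∈ ℤ^{m−1}` with
`|nᵢ| ≤ N` for each `i` satisfying `P n₁ + ⋯ + P n_{m−1} + P (n − n₁ − ⋯ − n_{m−1}) = j`. -/
noncomputable def rcountm (m N : ℕ) (n j : ℤ) : ℕ :=
  ((Fintype.piFinset (fun _ : Fin (m - 1) => Finset.Icc (-(N : ℤ)) (N : ℤ))).filter
    (fun v => (∑ i, P (v i)) + P (n - ∑ i, v i) = j)).card

/-!
Fixing all but two of the variables costs a factor `2N + 1` each, so it suffices to show that the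
number of pairs `(a, b)` with `|a|, |b| ≤ N` and `P a + P b + P c = L`, where `c = K - a - b`, is
`O(N^δ)` for every `δ > 0`. For such a pair,
`(3(a + b) - 4)(3(b + c) - 4)(3(c + a) - 4) = 9 P(K) - 4(3K - 4)² - 9L`,
a nonzero number depending only on `K` and `L`. The sum `a + b` determines the pair up to order,
and `3(a + b) - 4` divides this number. If `|K| ≤ 210 N²` the number is `O(N⁵)` and the divisor
bound `τ(M) = O(M^δ)` concludes; if `|K|` is larger, the other two factors are both close to
`3|K|`, which leaves room for only one value of `a + b`.
-/

open Finset

namespace Nat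

theorem succ_pow_le_two_mul_pow_mul_two_pow {k : ℕ} (hk : k ≠ 0) (e : ℕ) :
    (e + 1) ^ k ≤ (2 * k) ^ k * 2 ^ e := by
  have hlin : e + 1 ≤ 2 * k * 2 ^ (e / k) := by
    have := Nat.div_add_mod e k
    have := Nat.mod_lt e (Nat.pos_of_ne_zero hk)
    have : e / k < 2 ^ (e / k) := Nat.lt_two_pow_self
    nlinarith
  calc (e + 1) ^ k ≤ (2 * k * 2 ^ (e / k)) ^ k := Nat.pow_le_pow_left hlin k
    _ = (2 * k) ^ k * 2 ^ (e / k * k) := by rw [mul_pow, ← pow_mul]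
    _ ≤ (2 * k) ^ k * 2 ^ e :=
      Nat.mul_le_mul_left _ (Nat.pow_le_pow_right two_pos (Nat.div_mul_le_self e k))

theorem succ_pow_le_pow_of_two_pow_le {k p : ℕ} (hp : 2 ^ k ≤ p) (e : ℕ) :
    (e + 1) ^ k ≤ p ^ e :=
  calc (e + 1) ^ k ≤ (2 ^ e) ^ k := Nat.pow_le_pow_left Nat.lt_two_pow_self k
    _ = (2 ^ k) ^ e := by rw [← pow_mul, ← pow_mul, mul_comm]
    _ ≤ p ^ e := Nat.pow_le_pow_left hp e

/-- Each prime `p ≥ 2 ^ k` contributes `(e + 1) ^ k ≤ p ^ e`, and each of the fewer than `2 ^ k`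
smaller ones at most an extra factor `(2k) ^ k`. -/
theorem card_divisors_pow_le {k : ℕ} (hk : k ≠ 0) {n : ℕ} (hn : n ≠ 0) :
    #n.divisors ^ k ≤ ((2 * k) ^ k) ^ 2 ^ k * n := by
  set c : ℕ → ℕ := fun p => if p < 2 ^ k then (2 * k) ^ k else 1
  have hfactor : ∀ p ∈ n.primeFactors,
      (n.factorization p + 1) ^ k ≤ c p * p ^ n.factorization p := by
    intro p hp
    by_cases hpk : p < 2 ^ k
    · simp only [c, if_pos hpk]
      exact (succ_pow_le_two_mul_pow_mul_two_pow hk _).trans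
        (Nat.mul_le_mul_left _ (Nat.pow_le_pow_left (prime_of_mem_primeFactors hp).two_le _))
    · simpa [c, hpk] using succ_pow_le_pow_of_two_pow_le (not_lt.1 hpk) _
  have hconst : ∏ p ∈ n.primeFactors, c p ≤ ((2 * k) ^ k) ^ 2 ^ k := by
    rw [prod_ite, prod_const, prod_const, one_pow, mul_one]
    refine Nat.pow_le_pow_right (Nat.pos_of_ne_zero (by positivity)) ?_
    simpa using card_le_card (s := {p ∈ n.primeFactors | p < 2 ^ k}) (t := range (2 ^ k))
      fun p hp => mem_range.2 (mem_filter.1 hp).2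
  calc #n.divisors ^ k = ∏ p ∈ n.primeFactors, (n.factorization p + 1) ^ k := by
        rw [card_divisors hn, prod_pow]
    _ ≤ ∏ p ∈ n.primeFactors, c p * p ^ n.factorization p := prod_le_prod' hfactor
    _ = (∏ p ∈ n.primeFactors, c p) * n := by
        rw [prod_mul_distrib, ← prod_primeFactors_pow_factorization hn]
    _ ≤ ((2 * k) ^ k) ^ 2 ^ k * n := Nat.mul_le_mul_right _ hconst

theorem exists_card_divisors_le_rpow {δ : ℝ} (hδ : 0 < δ) :
    ∃ C : ℝ, 0 < C ∧ ∀ n : ℕ, n ≠ 0 → (#n.divisors : ℝ) ≤ C * (n : ℝ) ^ δ := by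
  obtain ⟨k, hk⟩ := exists_nat_gt δ⁻¹
  have hk0 : k ≠ 0 := by rintro rfl; have := inv_pos.2 hδ; push_cast at hk; linarith
  set D : ℕ := ((2 * k) ^ k) ^ 2 ^ k
  have hD : 1 ≤ (D : ℝ) := by exact_mod_cast Nat.one_le_iff_ne_zero.2 (by positivity)
  refine ⟨D, by positivity, fun n hn => ?_⟩
  have hn1 : (1 : ℝ) ≤ n := by exact_mod_cast Nat.one_le_iff_ne_zero.2 hn
  have hδk : 1 ≤ δ * k := by
    rw [inv_lt_iff_one_lt_mul₀ hδ] at hk; linarith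
  refine le_of_pow_le_pow_left₀ hk0 (by positivity) ?_
  calc (#n.divisors : ℝ) ^ k ≤ D * n := by exact_mod_cast card_divisors_pow_le hk0 hn
    _ ≤ D ^ k * (n : ℝ) ^ (δ * k) := by
        gcongr
        · exact le_self_pow₀ hD hk0
        · simpa using Real.rpow_le_rpow_of_exponent_le hn1 hδk
    _ = (D * (n : ℝ) ^ δ) ^ k := by rw [mul_pow, Real.rpow_mul_natCast (by positivity)]

end Nat

noncomputable def solCount (f : ℤ → ℤ) (r N : ℕ) (n j : ℤ) : ℕ :=
  #{v ∈ Fintype.piFinset fun _ : Fin r => Icc (-(N : ℤ)) N | ∑ i, f (v i) + f (n - ∑ i, v i) = j}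

theorem rcountm_eq_solCount (m N : ℕ) (n j : ℤ) : rcountm m N n j = solCount P (m - 1) N n j :=
  rfl

theorem solCount_succ_le (f : ℤ → ℤ) (r N : ℕ) (n j : ℤ) :
    solCount f (r + 1) N n j ≤ ∑ t ∈ Icc (-(N : ℤ)) N, solCount f r N (n - t) (j - f t) := by
  classical
  rw [solCount, card_eq_sum_card_fiberwise (f := fun v => v 0)
    fun v hv => Fintype.mem_piFinset.1 (mem_filter.1 hv).1 0]
  refine sum_le_sum fun t _ => card_le_card_of_injOn Fin.tail ?_ ?_
  · intro v hv
    simp only [coe_filter, Set.mem_ofPred_eq, mem_filter, Fintype.mem_piFinset] at hv ⊢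
    obtain ⟨⟨hbox, hsum⟩, rfl⟩ := hv
    refine ⟨fun i => hbox i.succ, ?_⟩
    rw [Fin.sum_univ_succ, Fin.sum_univ_succ] at hsum
    rw [← hsum]
    simp only [Fin.tail, sub_sub]
    ring
  · intro v hv w hw hvw
    rw [← Fin.cons_self_tail v, ← Fin.cons_self_tail w, hvw, (mem_filter.1 hv).2,
      (mem_filter.1 hw).2]

theorem solCount_add_le {f : ℤ → ℤ} {r N : ℕ} {B : ℝ}
    (hB : ∀ n j, (solCount f r N n j : ℝ) ≤ B) (s : ℕ) (n j : ℤ) :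
    (solCount f (r + s) N n j : ℝ) ≤ (2 * N + 1) ^ s * B := by
  induction s generalizing n j with
  | zero => simpa using hB n j
  | succ s ih =>
    calc (solCount f (r + s + 1) N n j : ℝ)
        ≤ ∑ t ∈ Icc (-(N : ℤ)) N, (solCount f (r + s) N (n - t) (j - f t) : ℝ) := by
          exact_mod_cast solCount_succ_le f (r + s) N n j
      _ ≤ ∑ _t ∈ Icc (-(N : ℤ)) N, (2 * N + 1 : ℝ) ^ s * B := sum_le_sum fun t _ => ih _ _
      _ = (2 * N + 1) ^ (s + 1) * B := by
          rw [sum_const, Int.card_Icc, nsmul_eq_mul, pow_succ,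
            show (N + 1 - -N : ℤ).toNat = 2 * N + 1 by omega]
          push_cast
          ring

noncomputable def pairSet (f : ℤ → ℤ) (N : ℕ) (K L : ℤ) : Finset (ℤ × ℤ) :=
  {q ∈ Icc (-(N : ℤ)) N ×ˢ Icc (-(N : ℤ)) N | f q.1 + f q.2 + f (K - q.1 - q.2) = L}

theorem mem_pairSet {f : ℤ → ℤ} {N : ℕ} {K L : ℤ} {q : ℤ × ℤ} :
    q ∈ pairSet f N K L ↔ |q.1| ≤ N ∧ |q.2| ≤ N ∧ f q.1 + f q.2 + f (K - q.1 - q.2) = L := by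
  simp [pairSet, abs_le, and_assoc]

theorem solCount_two (f : ℤ → ℤ) (N : ℕ) (n j : ℤ) : solCount f 2 N n j = #(pairSet f N n j) := by
  refine card_nbij' (fun v => (v 0, v 1)) (fun q => ![q.1, q.2]) (fun v hv => ?_) (fun q hq => ?_)
    (fun v _ => ?_) fun q _ => rfl
  · simp only [coe_filter, Set.mem_ofPred_eq, Fintype.mem_piFinset, mem_Icc,
      Fin.sum_univ_two] at hv
    simp only [mem_coe, mem_pairSet, abs_le, sub_sub]
    exact ⟨hv.1 0, hv.1 1, hv.2⟩
  · simp only [mem_coe, mem_pairSet, abs_le, sub_sub] at hq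
    simp only [coe_filter, Set.mem_ofPred_eq, Fintype.mem_piFinset, mem_Icc, Fin.sum_univ_two,
      Fin.forall_fin_two]
    exact ⟨⟨hq.1, hq.2.1⟩, hq.2.2⟩
  · ext i; fin_cases i <;> rfl

def resonanceProduct (K L : ℤ) : ℤ := 9 * P K - 4 * (3 * K - 4) ^ 2 - 9 * L

/-- With `c = K - a - b`, the factors are `3(a + b) - 4`, `3(b + c) - 4`, `3(c + a) - 4`; the
identity comes from `a³ + b³ + c³ - (a + b + c)³ = -3(a + b)(b + c)(c + a)`. -/
theorem mul_mul_eq_resonanceProduct {a b K L : ℤ} (h : P a + P b + P (K - a - b) = L) :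
    (3 * (a + b) - 4) * ((3 * (K - a) - 4) * (3 * (K - b) - 4)) = resonanceProduct K L := by
  simp only [P, resonanceProduct] at *
  linear_combination (-9 : ℤ) * h

theorem resonanceProduct_ne_zero (K L : ℤ) : resonanceProduct K L ≠ 0 := by
  have : resonanceProduct K L = 3 * (3 * P K - 12 * K ^ 2 + 32 * K - 3 * L - 22) + 2 := by
    simp only [resonanceProduct]; ring
  omega

theorem eq_or_eq_swap_of_P_add_P_eq {a b a' b' : ℤ} (hs : a' + b' = a + b)
    (hP : P a' + P b' = P a + P b) : a' = a ∧ b' = b ∨ a' = b ∧ b' = a := by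
  obtain rfl : b' = a + b - a' := by omega
  have hfactor : (3 * (a + b) - 4) * ((a' - a) * (a' - b)) = 0 := by
    simp only [P] at hP
    linear_combination hP
  rcases mul_eq_zero.1 hfactor with h | h
  · omega
  rcases mul_eq_zero.1 h with h | h
  · left; omega
  · right; omega

theorem card_pairSet_le_two_mul_card_image_add (N : ℕ) (K L : ℤ) :
    #(pairSet P N K L) ≤ 2 * #((pairSet P N K L).image fun q => q.1 + q.2) := by
  refine card_le_mul_card_image _ 2 fun s hs => ?_
  obtain ⟨q, hq, rfl⟩ := mem_image.1 hs
  calc #{q' ∈ pairSet P N K L | q'.1 + q'.2 = q.1 + q.2} ≤ #{q, q.swap} := by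
        refine card_le_card fun q' hq' => ?_
        obtain ⟨hq'mem, hsum⟩ := mem_filter.1 hq'
        have hP : P q'.1 + P q'.2 = P q.1 + P q.2 := by
          have h := (mem_pairSet.1 hq).2.2
          have h' := (mem_pairSet.1 hq'mem).2.2
          rw [sub_sub, ← hsum, ← sub_sub] at h
          omega
        rcases eq_or_eq_swap_of_P_add_P_eq hsum hP with ⟨h1, h2⟩ | ⟨h1, h2⟩ <;>
          simp [Prod.ext_iff, h1, h2]
    _ ≤ 2 := card_le_two

theorem card_image_add_pairSet_le_card_divisors (N : ℕ) (K L : ℤ) :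
    #((pairSet P N K L).image fun q => q.1 + q.2) ≤ #(resonanceProduct K L).natAbs.divisors := by
  refine card_le_card_of_injOn (fun s => (3 * s - 4).natAbs) (fun s hs => ?_) fun s _ s' _ h => ?_
  · obtain ⟨q, hq, rfl⟩ := mem_image.1 hs
    rw [mem_coe, Nat.mem_divisors, Int.natAbs_ne_zero]
    refine ⟨Int.natAbs_dvd_natAbs.2 ?_, resonanceProduct_ne_zero K L⟩
    rw [← mul_mul_eq_resonanceProduct (mem_pairSet.1 hq).2.2]
    exact dvd_mul_right _ _
  · have := Int.natAbs_eq_natAbs_iff.1 h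
    omega

theorem abs_three_mul_sub_sub_four_bounds {a K N : ℤ} (ha : |a| ≤ N) :
    3 * |K| - (3 * N + 4) ≤ |3 * (K - a) - 4| ∧ |3 * (K - a) - 4| ≤ 3 * |K| + (3 * N + 4) := by
  rw [abs_le] at ha
  constructor <;> cases abs_cases (3 * (K - a) - 4) <;> cases abs_cases K <;> linarith

theorem sq_le_of_mul_mul_eq {A B x y z x' y' z' : ℤ} (hA : 0 ≤ A) (hx : |x| ≤ B) (hy : |y| ≤ B)
    (hx' : A ≤ |x'|) (hy' : A ≤ |y'|) (hz : |z| < |z'|) (h : x * y * z = x' * y' * z') :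
    A ^ 2 ≤ (B ^ 2 - A ^ 2) * |z| := by
  have habs : |x| * |y| * |z| = |x'| * |y'| * |z'| := by simp only [← abs_mul, h]
  have hlow : A ^ 2 * (|z| + 1) ≤ |x'| * |y'| * |z'| := by
    rw [sq]; gcongr; omega
  have hup : |x| * |y| * |z| ≤ B ^ 2 * |z| := by
    rw [sq]; gcongr; exact (abs_nonneg x).trans hx
  linarith

theorem abs_three_mul_add_sub_four_le_of_mem_pairSet {N : ℕ} (hN : 1 ≤ N) {K L : ℤ}
    (hK : 210 * (N : ℤ) ^ 2 < |K|) {q q' : ℤ × ℤ} (hq : q ∈ pairSet P N K L)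
    (hq' : q' ∈ pairSet P N K L) : |3 * (q.1 + q.2) - 4| ≤ |3 * (q'.1 + q'.2) - 4| := by
  obtain ⟨ha, hb, h⟩ := mem_pairSet.1 hq
  obtain ⟨ha', hb', h'⟩ := mem_pairSet.1 hq'
  by_contra! hlt
  have hN2 : (N : ℤ) ≤ N ^ 2 := by nlinarith
  set A := 3 * |K| - (3 * N + 4)
  have hA : 2 * |K| ≤ A := by linarith
  have hsq := sq_le_of_mul_mul_eq (A := A) (B := 3 * |K| + (3 * N + 4)) (by linarith)
    (abs_three_mul_sub_sub_four_bounds ha').2 (abs_three_mul_sub_sub_four_bounds hb').2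
    (abs_three_mul_sub_sub_four_bounds ha).1 (abs_three_mul_sub_sub_four_bounds hb).1 hlt
    (by linear_combination mul_mul_eq_resonanceProduct h' - mul_mul_eq_resonanceProduct h)
  have hz : |3 * (q'.1 + q'.2) - 4| ≤ 6 * N + 4 := by
    rw [abs_le] at ha' hb' ⊢; constructor <;> linarith
  have hlin : 4 * |K| ^ 2 ≤ 12 * |K| * ((3 * N + 4) * (6 * N + 4)) := calc
    4 * |K| ^ 2 ≤ A ^ 2 := by nlinarith
    _ ≤ 12 * |K| * (3 * N + 4) * |3 * (q'.1 + q'.2) - 4| := by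
        convert hsq using 2; ring
    _ ≤ 12 * |K| * ((3 * N + 4) * (6 * N + 4)) := by
        rw [← mul_assoc]; gcongr
  nlinarith

theorem card_image_add_pairSet_le_one {N : ℕ} (hN : 1 ≤ N) {K L : ℤ}
    (hK : 210 * (N : ℤ) ^ 2 < |K|) : #((pairSet P N K L).image fun q => q.1 + q.2) ≤ 1 := by
  refine card_le_one.2 fun s hs s' hs' => ?_
  obtain ⟨q, hq, rfl⟩ := mem_image.1 hs
  obtain ⟨q', hq', rfl⟩ := mem_image.1 hs'
  have := abs_eq_abs.1 <| le_antisymm (abs_three_mul_add_sub_four_le_of_mem_pairSet hN hK hq hq')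
    (abs_three_mul_add_sub_four_le_of_mem_pairSet hN hK hq' hq)
  omega

theorem abs_resonanceProduct_le {N : ℕ} (hN : 1 ≤ N) {K L : ℤ} (hK : |K| ≤ 210 * (N : ℤ) ^ 2)
    {q : ℤ × ℤ} (hq : q ∈ pairSet P N K L) :
    |resonanceProduct K L| ≤ 4096000 * (N : ℤ) ^ 5 := by
  obtain ⟨ha, hb, h⟩ := mem_pairSet.1 hq
  have hN2 : (N : ℤ) ≤ N ^ 2 := by nlinarith
  have hz : |3 * (q.1 + q.2) - 4| ≤ 10 * N := by
    rw [abs_le] at ha hb ⊢; constructor <;> linarith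
  have hx := (abs_three_mul_sub_sub_four_bounds (K := K) ha).2
  have hy := (abs_three_mul_sub_sub_four_bounds (K := K) hb).2
  calc |resonanceProduct K L|
      = |3 * (q.1 + q.2) - 4| * (|3 * (K - q.1) - 4| * |3 * (K - q.2) - 4|) := by
        rw [← mul_mul_eq_resonanceProduct h, abs_mul, abs_mul]
    _ ≤ 10 * N * (640 * N ^ 2 * (640 * N ^ 2)) := by gcongr <;> linarith
    _ = 4096000 * N ^ 5 := by ring

theorem exists_card_pairSet_le_rpow {δ : ℝ} (hδ : 0 < δ) : ∃ C : ℝ, 0 < C ∧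
    ∀ N : ℕ, 1 ≤ N → ∀ K L : ℤ, (#(pairSet P N K L) : ℝ) ≤ C * (N : ℝ) ^ δ := by
  obtain ⟨C, hC, hdiv⟩ :=
    Nat.exists_card_divisors_le_rpow (div_pos hδ (by norm_num : (0 : ℝ) < 5))
  refine ⟨2 * C * 4096000 ^ (δ / 5) + 2, by positivity, fun N hN K L => ?_⟩
  have hN1 : (1 : ℝ) ≤ N := by exact_mod_cast hN
  have hNδ : (1 : ℝ) ≤ (N : ℝ) ^ δ := Real.one_le_rpow hN1 hδ.le
  have himage := card_pairSet_le_two_mul_card_image_add N K L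
  rcases (pairSet P N K L).eq_empty_or_nonempty with hempty | ⟨q, hq⟩
  · rw [hempty, card_empty, Nat.cast_zero]; positivity
  rcases le_or_gt |K| (210 * (N : ℤ) ^ 2) with hK | hK
  · set M := (resonanceProduct K L).natAbs
    have hM0 : M ≠ 0 := Int.natAbs_ne_zero.2 (resonanceProduct_ne_zero K L)
    have hM : (M : ℝ) ≤ 4096000 * (N : ℝ) ^ 5 := by
      exact_mod_cast Int.abs_eq_natAbs (resonanceProduct K L) ▸ abs_resonanceProduct_le hN hK hq
    calc (#(pairSet P N K L) : ℝ) ≤ 2 * #M.divisors := by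
          exact_mod_cast himage.trans
            (Nat.mul_le_mul_left 2 (card_image_add_pairSet_le_card_divisors N K L))
      _ ≤ 2 * (C * (M : ℝ) ^ (δ / 5)) := by gcongr; exact hdiv M hM0
      _ ≤ 2 * (C * (4096000 * (N : ℝ) ^ 5) ^ (δ / 5)) := by gcongr
      _ = 2 * C * 4096000 ^ (δ / 5) * (N : ℝ) ^ δ := by
          rw [Real.mul_rpow (by norm_num) (by positivity), ← Real.rpow_natCast_mul (by positivity),
            Nat.cast_ofNat, mul_div_cancel₀ δ (by norm_num : (5 : ℝ) ≠ 0)]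
          ring
      _ ≤ (2 * C * 4096000 ^ (δ / 5) + 2) * (N : ℝ) ^ δ := by gcongr; linarith
  · calc (#(pairSet P N K L) : ℝ) ≤ 2 := by
          exact_mod_cast himage.trans (by simpa using card_image_add_pairSet_le_one hN hK)
      _ ≤ (2 * C * 4096000 ^ (δ / 5) + 2) * (N : ℝ) ^ δ := by
          nlinarith [show 0 ≤ 2 * C * 4096000 ^ (δ / 5) by positivity]

theorem stmt6 :
    ∀ m : ℕ, 3 ≤ m → ∀ ε : ℝ, 0 < ε → ∃ C : ℝ, 0 < C ∧
      ∀ (N : ℕ), 1 ≤ N → ∀ (n j : ℤ),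
        (rcountm m N n j : ℝ) ≤ C * (N : ℝ) ^ ((m : ℝ) - 3 + ε) := by
  intro m hm ε hε
  obtain ⟨C, hC, hpair⟩ := exists_card_pairSet_le_rpow hε
  refine ⟨3 ^ (m - 3) * C, by positivity, fun N hN n j => ?_⟩
  have hN1 : (1 : ℝ) ≤ N := by exact_mod_cast hN
  have hcount := solCount_add_le (B := C * (N : ℝ) ^ ε)
    (fun n j => (solCount_two P N n j).symm ▸ hpair N hN n j) (m - 3) n j
  rw [rcountm_eq_solCount, show m - 1 = 2 + (m - 3) by omega]
  calc _ ≤ (2 * N + 1 : ℝ) ^ (m - 3) * (C * (N : ℝ) ^ ε) := hcount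
    _ ≤ (3 * N : ℝ) ^ (m - 3) * (C * (N : ℝ) ^ ε) := by gcongr; linarith
    _ = 3 ^ (m - 3) * C * (N : ℝ) ^ ((m : ℝ) - 3 + ε) := by
        rw [Real.rpow_add (by positivity), ← Nat.cast_ofNat, ← Nat.cast_sub hm,
          Real.rpow_natCast, mul_pow]
        ring
end

section
/- For every integer m ≥ 3 and every ε > 0 there exists a constant C_{ε,m} > 0 such that for every natural number N ≥ 1 and every sequence a : ℤ → ℂ supported in {n : |n| ≤ N}, the function u(x,t) = Σ_{|n|≤N} a(n) e^{i(nx + P(n)t)} satisfies ‖u‖_{L^{2m}(T²)} ≤ C_{ε,m} N^{(m−3)/(2m) + ε} (Σ_{|n|≤N} |a(n)|²)^{1/2}. -/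
open scoped BigOperators

noncomputable section

/-- The solution `u(x,t) = Σ_n a(n) e^{i(nx + P(n)t)}` of the linearized periodic
Dysthe equation with initial datum `u₀(x) = Σ_n a(n) e^{inx}`. -/
def sol (a : ℤ →₀ ℂ) (x t : ℝ) : ℂ :=
  ∑ n ∈ a.support, a n * Complex.exp (Complex.I * (((n : ℝ) * x + (P n : ℝ) * t : ℝ) : ℂ))

/-- `L^p` norm on the torus `T² = [0,2π]_x × [0,2π]_t`. -/
def LpNorm (p : ℝ) (u : ℝ → ℝ → ℂ) : ℝ :=
  (∫ x in (0:ℝ)..(2 * Real.pi), ∫ t in (0:ℝ)..(2 * Real.pi), ‖u x t‖ ^ p) ^ (1 / p)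

/-- Sobolev `H^σ` norm of the initial datum with Fourier coefficients `a`. -/
def HNorm (σ : ℝ) (a : ℤ →₀ ℂ) : ℝ :=
  (∑ n ∈ a.support, (1 + |(n : ℝ)|) ^ (2 * σ) * ‖a n‖ ^ 2) ^ ((1:ℝ) / 2)

/-!
Writing `|u|⁶ = |u³|²` and expanding `u³` in characters of `T²`, orthogonality bounds `‖u‖₆⁶` by
`(2π)²` times `‖a‖₂⁶` times the largest number of triples `(n₁, n₂, n₃)` with prescribed
`(n₁ + n₂ + n₃, P n₁ + P n₂ + P n₃)`. These two numbers determine the integer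
`3 ∏ (3 (nᵢ + nⱼ) - 4)`, which is nonzero and `O(N³)`, and two of its factors determine the
triple; so the divisor bound `τ(K) ≪_δ K^δ` leaves `O(N^δ)` triples. The `L^{2m}` bound follows
from `|u|^{2m} ≤ ‖u‖_∞^{2m-6} |u|⁶` and `‖u‖_∞² ≤ (2N + 1) ‖a‖₂²`.
-/

open Complex Finset
open scoped Real ComplexConjugate

lemma Int.card_divisors (z : ℤ) : #z.divisors = 2 * #z.natAbs.divisors := by
  rw [Int.divisors, card_disjUnion, card_map, card_map, two_mul]

namespace Dysthe

section TorusIntegral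

variable {E : Type*} [NormedAddCommGroup E] [NormedSpace ℝ E]

def torusIntegral (f : ℝ → ℝ → E) : E :=
  ∫ x in (0:ℝ)..2 * π, ∫ t in (0:ℝ)..2 * π, f x t

lemma continuous_integral_of_continuous_uncurry {f : ℝ → ℝ → E}
    (hf : Continuous (Function.uncurry f)) :
    Continuous fun x => ∫ t in (0:ℝ)..2 * π, f x t :=
  intervalIntegral.continuous_parametric_intervalIntegral_of_continuous hf continuous_const

lemma torusIntegral_finsetSum {ι : Type*} (s : Finset ι) (f : ι → ℝ → ℝ → E)
    (hf : ∀ i ∈ s, Continuous (Function.uncurry (f i))) :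
    torusIntegral (fun x t => ∑ i ∈ s, f i x t) = ∑ i ∈ s, torusIntegral (f i) := by
  have inner (x : ℝ) : ∫ t in (0:ℝ)..2 * π, ∑ i ∈ s, f i x t
      = ∑ i ∈ s, ∫ t in (0:ℝ)..2 * π, f i x t :=
    intervalIntegral.integral_finsetSum fun i hi =>
      ((hf i hi).comp (Continuous.prodMk_right x)).intervalIntegrable _ _
  simp only [torusIntegral, inner]
  exact intervalIntegral.integral_finsetSum fun i hi =>
    (continuous_integral_of_continuous_uncurry (hf i hi)).intervalIntegrable _ _

lemma torusIntegral_mono {f g : ℝ → ℝ → ℝ} (hf : Continuous (Function.uncurry f))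
    (hg : Continuous (Function.uncurry g)) (hfg : ∀ x t, f x t ≤ g x t) :
    torusIntegral f ≤ torusIntegral g := by
  have h2π : (0:ℝ) ≤ 2 * π := by positivity
  refine intervalIntegral.integral_mono_on h2π
    ((continuous_integral_of_continuous_uncurry hf).intervalIntegrable _ _)
    ((continuous_integral_of_continuous_uncurry hg).intervalIntegrable _ _) fun x _ => ?_
  exact intervalIntegral.integral_mono_on h2π
    ((hf.comp (Continuous.prodMk_right x)).intervalIntegrable _ _)
    ((hg.comp (Continuous.prodMk_right x)).intervalIntegrable _ _) fun t _ => hfg x t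

lemma torusIntegral_nonneg {f : ℝ → ℝ → ℝ} (hf : ∀ x t, 0 ≤ f x t) : 0 ≤ torusIntegral f := by
  have h2π : (0:ℝ) ≤ 2 * π := by positivity
  exact intervalIntegral.integral_nonneg h2π fun x _ =>
    intervalIntegral.integral_nonneg h2π fun t _ => hf x t

lemma torusIntegral_const_mul {𝕜 : Type*} [NormedDivisionRing 𝕜] [NormedAlgebra ℝ 𝕜] (r : 𝕜)
    (f : ℝ → ℝ → 𝕜) :
    torusIntegral (fun x t => r * f x t) = r * torusIntegral f := by
  simp only [torusIntegral, intervalIntegral.integral_const_mul]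

lemma torusIntegral_ofReal (f : ℝ → ℝ → ℝ) :
    torusIntegral (fun x t => (f x t : ℂ)) = ((torusIntegral f : ℝ) : ℂ) := by
  simp only [torusIntegral, intervalIntegral.integral_ofReal]

end TorusIntegral

def torusChar (ξ : ℤ × ℤ) (x t : ℝ) : ℂ := exp (I * ((ξ.1 * x + ξ.2 * t : ℝ) : ℂ))

lemma torusChar_add (ξ η : ℤ × ℤ) (x t : ℝ) :
    torusChar (ξ + η) x t = torusChar ξ x t * torusChar η x t := by
  simp only [torusChar, ← exp_add, Prod.fst_add, Prod.snd_add]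
  push_cast
  ring_nf

lemma conj_torusChar (ξ : ℤ × ℤ) (x t : ℝ) : conj (torusChar ξ x t) = torusChar (-ξ) x t := by
  simp only [torusChar, ← exp_conj, map_mul, conj_I, conj_ofReal, Prod.fst_neg, Prod.snd_neg]
  push_cast
  ring_nf

lemma norm_torusChar (ξ : ℤ × ℤ) (x t : ℝ) : ‖torusChar ξ x t‖ = 1 := by
  simp [torusChar, norm_exp]

lemma continuous_torusChar (ξ : ℤ × ℤ) : Continuous (Function.uncurry (torusChar ξ)) := by
  unfold torusChar Function.uncurry
  fun_prop

lemma integral_exp_int_mul_I (k : ℤ) :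
    ∫ x in (0:ℝ)..2 * π, exp (I * ((k * x : ℝ) : ℂ)) = if k = 0 then ((2 * π : ℝ) : ℂ) else 0 := by
  split_ifs with hk
  · simp [hk]
  · have hc : I * k ≠ 0 := mul_ne_zero I_ne_zero (Int.cast_ne_zero.mpr hk)
    have harg (x : ℝ) : I * ((k * x : ℝ) : ℂ) = I * k * x := by push_cast; ring
    simp only [harg]
    have hperiod : I * k * ((2 * π : ℝ) : ℂ) = k * (2 * π * I) := by push_cast; ring
    rw [integral_exp_mul_complex hc, hperiod, exp_int_mul_two_pi_mul_I]
    simp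

lemma torusIntegral_torusChar (ξ : ℤ × ℤ) :
    torusIntegral (torusChar ξ) = if ξ = 0 then (((2 * π) ^ 2 : ℝ) : ℂ) else 0 := by
  have hsplit (x t : ℝ) : torusChar ξ x t
      = exp (I * ((ξ.1 * x : ℝ) : ℂ)) * exp (I * ((ξ.2 * t : ℝ) : ℂ)) := by
    rw [torusChar, ← exp_add]; push_cast; ring_nf
  simp only [torusIntegral, hsplit, intervalIntegral.integral_const_mul,
    intervalIntegral.integral_mul_const, integral_exp_int_mul_I, Prod.ext_iff, Prod.fst_zero,
    Prod.snd_zero]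
  split_ifs <;> simp_all
  ring

section TrigPoly

variable {ι κ : Type*}

def trigPoly (s : Finset ι) (c : ι → ℂ) (ξ : ι → ℤ × ℤ) (x t : ℝ) : ℂ :=
  ∑ i ∈ s, c i * torusChar (ξ i) x t

lemma trigPoly_mul (s : Finset ι) (s' : Finset κ) (c : ι → ℂ) (c' : κ → ℂ)
    (ξ : ι → ℤ × ℤ) (ξ' : κ → ℤ × ℤ) (x t : ℝ) :
    trigPoly s c ξ x t * trigPoly s' c' ξ' x t
      = trigPoly (s ×ˢ s') (fun p => c p.1 * c' p.2) (fun p => ξ p.1 + ξ' p.2) x t := by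
  simp only [trigPoly, sum_mul_sum, sum_product, torusChar_add]
  exact sum_congr rfl fun i _ => sum_congr rfl fun j _ => by ring

lemma conj_trigPoly (s : Finset ι) (c : ι → ℂ) (ξ : ι → ℤ × ℤ) (x t : ℝ) :
    conj (trigPoly s c ξ x t) = trigPoly s (fun i => conj (c i)) (fun i => -ξ i) x t := by
  simp only [trigPoly, map_sum, map_mul, conj_torusChar]

lemma continuous_trigPoly (s : Finset ι) (c : ι → ℂ) (ξ : ι → ℤ × ℤ) :
    Continuous (Function.uncurry (trigPoly s c ξ)) := by
  have h : Function.uncurry (trigPoly s c ξ)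
      = fun p => ∑ i ∈ s, c i * Function.uncurry (torusChar (ξ i)) p := rfl
  rw [h]
  exact continuous_finsetSum _ fun i _ => continuous_const.mul (continuous_torusChar _)

lemma norm_trigPoly_le (s : Finset ι) (c : ι → ℂ) (ξ : ι → ℤ × ℤ) (x t : ℝ) :
    ‖trigPoly s c ξ x t‖ ≤ ∑ i ∈ s, ‖c i‖ :=
  (norm_sum_le _ _).trans_eq <| sum_congr rfl fun i _ => by rw [norm_mul, norm_torusChar, mul_one]

lemma torusIntegral_trigPoly [DecidableEq ι] (s : Finset ι) (c : ι → ℂ) (ξ : ι → ℤ × ℤ) :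
    torusIntegral (trigPoly s c ξ) = (((2 * π) ^ 2 : ℝ) : ℂ) * ∑ i ∈ s with ξ i = 0, c i := by
  have h : trigPoly s c ξ = fun x t => ∑ i ∈ s, c i * torusChar (ξ i) x t := rfl
  rw [h, torusIntegral_finsetSum s (fun i x t => c i * torusChar (ξ i) x t)
    fun i _ => continuous_const.mul (continuous_torusChar (ξ i)), sum_filter, mul_sum]
  refine sum_congr rfl fun i _ => ?_
  rw [torusIntegral_const_mul, torusIntegral_torusChar]
  split_ifs <;> ring

lemma sum_sum_ite_mul_le [DecidableEq κ] (s : Finset ι) (ξ : ι → κ) (g : ι → ℝ) (R : ℝ)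
    (hR : ∀ i ∈ s, (#{j ∈ s | ξ i = ξ j} : ℝ) ≤ R) :
    ∑ i ∈ s, ∑ j ∈ s, (if ξ i = ξ j then g i * g j else 0) ≤ R * ∑ i ∈ s, g i ^ 2 := by
  have hsymm : ∑ i ∈ s, ∑ j ∈ s, (if ξ i = ξ j then g j ^ 2 else 0)
      = ∑ i ∈ s, ∑ j ∈ s, (if ξ i = ξ j then g i ^ 2 else 0) := by
    rw [sum_comm]
    simp only [eq_comm]
  calc ∑ i ∈ s, ∑ j ∈ s, (if ξ i = ξ j then g i * g j else 0)
      ≤ ∑ i ∈ s, ∑ j ∈ s,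
          ((if ξ i = ξ j then g i ^ 2 else 0) + (if ξ i = ξ j then g j ^ 2 else 0)) / 2 := by
        gcongr with i _ j _
        split_ifs
        · nlinarith [sq_nonneg (g i - g j)]
        · simp
    _ = ∑ i ∈ s, ∑ j ∈ s, (if ξ i = ξ j then g i ^ 2 else 0) := by
        simp only [add_div, sum_add_distrib, ← sum_div, hsymm]
        ring
    _ = ∑ i ∈ s, g i ^ 2 * #{j ∈ s | ξ i = ξ j} :=
        sum_congr rfl fun i _ => by rw [← sum_filter, sum_const, nsmul_eq_mul, mul_comm]
    _ ≤ ∑ i ∈ s, g i ^ 2 * R := by gcongr with i hi; exact hR i hi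
    _ = R * ∑ i ∈ s, g i ^ 2 := by rw [← sum_mul, mul_comm]

lemma torusIntegral_norm_sq_trigPoly_le [DecidableEq ι] (s : Finset ι) (c : ι → ℂ)
    (ξ : ι → ℤ × ℤ) (R : ℝ) (hR : ∀ i ∈ s, (#{j ∈ s | ξ i = ξ j} : ℝ) ≤ R) :
    torusIntegral (fun x t => ‖trigPoly s c ξ x t‖ ^ 2) ≤ (2 * π) ^ 2 * R * ∑ i ∈ s, ‖c i‖ ^ 2 := by
  have hmul_conj (x t : ℝ) : ((‖trigPoly s c ξ x t‖ ^ 2 : ℝ) : ℂ) = trigPoly (s ×ˢ s)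
      (fun p => c p.1 * conj (c p.2)) (fun p => ξ p.1 + -ξ p.2) x t := by
    push_cast
    rw [← mul_conj', conj_trigPoly, trigPoly_mul]
  have hint : ((torusIntegral (fun x t => ‖trigPoly s c ξ x t‖ ^ 2) : ℝ) : ℂ)
      = (((2 * π) ^ 2 : ℝ) : ℂ) *
          ∑ i ∈ s, ∑ j ∈ s, (if ξ i = ξ j then c i * conj (c j) else 0) := by
    rw [← torusIntegral_ofReal]
    simp only [hmul_conj]
    rw [torusIntegral_trigPoly, sum_filter, sum_product]
    simp only [add_neg_eq_zero]
  calc torusIntegral (fun x t => ‖trigPoly s c ξ x t‖ ^ 2)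
      ≤ ‖((torusIntegral (fun x t => ‖trigPoly s c ξ x t‖ ^ 2) : ℝ) : ℂ)‖ := by
        rw [norm_real]; exact le_abs_self _
    _ ≤ (2 * π) ^ 2 * ∑ i ∈ s, ∑ j ∈ s, (if ξ i = ξ j then ‖c i‖ * ‖c j‖ else 0) := by
        rw [hint, norm_mul, norm_real, Real.norm_of_nonneg (by positivity)]
        gcongr
        refine (norm_sum_le _ _).trans (sum_le_sum fun i _ => (norm_sum_le _ _).trans ?_)
        gcongr with j _
        split_ifs <;> simp
    _ ≤ (2 * π) ^ 2 * (R * ∑ i ∈ s, ‖c i‖ ^ 2) := by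
        gcongr; exact sum_sum_ite_mul_le s ξ _ R hR
    _ = (2 * π) ^ 2 * R * ∑ i ∈ s, ‖c i‖ ^ 2 := by ring

end TrigPoly

lemma exists_add_one_le_mul_pow {b : ℝ} (hb : 1 < b) :
    ∃ A : ℝ, 1 ≤ A ∧ ∀ e : ℕ, (e + 1 : ℝ) ≤ A * b ^ e := by
  set A := max 1 (b - 1)⁻¹
  refine ⟨A, le_max_left _ _, fun e => ?_⟩
  have hc : 0 < b - 1 := sub_pos.mpr hb
  have bernoulli : 1 + e * (b - 1) ≤ b ^ e := one_add_mul_sub_le_pow (by linarith) e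
  have he : (e : ℝ) ≤ A * (e * (b - 1)) :=
    calc (e : ℝ) = (b - 1)⁻¹ * (e * (b - 1)) := by field_simp
      _ ≤ A * (e * (b - 1)) := by gcongr; exact le_max_right _ _
  calc (e + 1 : ℝ) ≤ A * (1 + e * (b - 1)) := by nlinarith [le_max_left 1 (b - 1)⁻¹]
    _ ≤ A * b ^ e := by gcongr

lemma rpow_natCast_eq_prod_primeFactors {n : ℕ} (hn : n ≠ 0) (δ : ℝ) :
    (n : ℝ) ^ δ = ∏ p ∈ n.primeFactors, ((p : ℝ) ^ δ) ^ n.factorization p := by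
  conv_lhs => rw [← Nat.prod_factorization_pow_eq_self hn]
  rw [Finsupp.prod, Nat.support_factorization, Nat.cast_prod,
    ← Real.finsetProd_rpow _ _ fun p _ => by positivity]
  refine prod_congr rfl fun p _ => ?_
  rw [Nat.cast_pow, Real.rpow_pow_comm (Nat.cast_nonneg p)]

lemma exists_card_divisors_le_mul_rpow {δ : ℝ} (hδ : 0 < δ) :
    ∃ C : ℝ, 0 < C ∧ ∀ n : ℕ, (#n.divisors : ℝ) ≤ C * (n : ℝ) ^ δ := by
  obtain ⟨A, hA, hAe⟩ := exists_add_one_le_mul_pow (Real.one_lt_rpow one_lt_two hδ)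
  set B := ⌈(2 : ℝ) ^ δ⁻¹⌉₊
  refine ⟨A ^ B, by positivity, fun n => ?_⟩
  rcases eq_or_ne n 0 with rfl | hn
  · simp [Real.zero_rpow hδ.ne']
  -- A prime `p ≥ 2^{1/δ}` has `e + 1 ≤ 2^e ≤ (p^δ)^e`; fewer than `B` primes are smaller.
  have hlocal : ∀ p ∈ n.primeFactors, (n.factorization p + 1 : ℝ)
      ≤ (if p < B then A else 1) * ((p : ℝ) ^ δ) ^ n.factorization p := by
    intro p hp
    have hp2 : (2 : ℝ) ≤ p := by exact_mod_cast (Nat.prime_of_mem_primeFactors hp).two_le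
    split_ifs with hpB
    · calc (n.factorization p + 1 : ℝ) ≤ A * ((2 : ℝ) ^ δ) ^ n.factorization p := hAe _
        _ ≤ A * ((p : ℝ) ^ δ) ^ n.factorization p := by gcongr
    · have h2 : (2 : ℝ) ≤ (p : ℝ) ^ δ :=
        calc (2 : ℝ) = ((2 : ℝ) ^ δ⁻¹) ^ δ := (Real.rpow_inv_rpow zero_le_two hδ.ne').symm
          _ ≤ (p : ℝ) ^ δ := by
            gcongr
            exact (Nat.le_ceil _).trans (by exact_mod_cast not_lt.mp hpB)
      calc (n.factorization p + 1 : ℝ) ≤ 2 ^ n.factorization p := by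
            exact_mod_cast Nat.lt_two_pow_self
        _ ≤ 1 * ((p : ℝ) ^ δ) ^ n.factorization p := by rw [one_mul]; gcongr
  calc (#n.divisors : ℝ) = ∏ p ∈ n.primeFactors, (n.factorization p + 1 : ℝ) := by
        rw [Nat.card_divisors hn]; push_cast; rfl
    _ ≤ ∏ p ∈ n.primeFactors, (if p < B then A else 1) * ((p : ℝ) ^ δ) ^ n.factorization p :=
        prod_le_prod (fun _ _ => by positivity) hlocal
    _ = (∏ p ∈ n.primeFactors, if p < B then A else 1) * (n : ℝ) ^ δ := by
        rw [prod_mul_distrib, rpow_natCast_eq_prod_primeFactors hn]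
    _ ≤ A ^ B * (n : ℝ) ^ δ := by
        gcongr
        rw [prod_ite, prod_const, prod_const_one, mul_one]
        refine pow_le_pow_right₀ hA ((card_le_card fun p hp => ?_).trans (card_range B).le)
        exact mem_range.mpr (mem_filter.mp hp).2

def cubeFreq (q : ℤ × ℤ × ℤ) : ℤ × ℤ := (q.1 + q.2.1 + q.2.2, P q.1 + P q.2.1 + P q.2.2)

def resonanceInvariant (ξ : ℤ × ℤ) : ℤ := (3 * ξ.1 - 6) ^ 3 + 60 * (3 * ξ.1 - 6) + 384 - 27 * ξ.2

/- With `yᵢ = 3nᵢ - 2` one has `27 P(nᵢ) = yᵢ³ + 60 yᵢ + 128`, and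
`(y₁ + y₂ + y₃)³ - (y₁³ + y₂³ + y₃³) = 3 (y₁ + y₂) (y₁ + y₃) (y₂ + y₃)`. -/
lemma resonanceInvariant_cubeFreq (q : ℤ × ℤ × ℤ) :
    resonanceInvariant (cubeFreq q)
      = 3 * ((3 * (q.2.1 + q.2.2) - 4) * (3 * (q.1 + q.2.2) - 4) * (3 * (q.1 + q.2.1) - 4)) := by
  simp only [resonanceInvariant, cubeFreq, P]
  ring

lemma card_filter_cubeFreq_eq_le (T : Finset (ℤ × ℤ × ℤ)) (p : ℤ × ℤ × ℤ) :
    #{q ∈ T | cubeFreq p = cubeFreq q} ≤ #(resonanceInvariant (cubeFreq p)).divisors ^ 2 := by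
  rw [sq, ← card_product]
  refine card_le_card_of_injOn (fun q => (3 * (q.2.1 + q.2.2) - 4, 3 * (q.1 + q.2.2) - 4))
    (fun q hq => ?_) (fun q hq q' hq' hqq' => ?_)
  · rw [(mem_filter.mp hq).2, resonanceInvariant_cubeFreq]
    have hK0 : 3 * ((3 * (q.2.1 + q.2.2) - 4) * (3 * (q.1 + q.2.2) - 4) *
        (3 * (q.1 + q.2.1) - 4)) ≠ 0 := by
      refine mul_ne_zero three_ne_zero (mul_ne_zero (mul_ne_zero ?_ ?_) ?_) <;> omega
    simp only [coe_product, Set.mem_prod, mem_coe, Int.mem_divisors, hK0, ne_eq,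
      not_false_eq_true, and_true]
    exact ⟨⟨3 * ((3 * (q.1 + q.2.2) - 4) * (3 * (q.1 + q.2.1) - 4)), by ring⟩,
      ⟨3 * ((3 * (q.2.1 + q.2.2) - 4) * (3 * (q.1 + q.2.1) - 4)), by ring⟩⟩
  · have hsum := congrArg Prod.fst ((mem_filter.mp hq).2.symm.trans (mem_filter.mp hq').2)
    simp only [cubeFreq, Prod.mk.injEq] at hsum hqq'
    ext <;> omega

lemma natAbs_resonanceInvariant_cubeFreq_le {N : ℕ} (hN : 1 ≤ N) {q : ℤ × ℤ × ℤ} (h₁ : |q.1| ≤ N)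
    (h₂ : |q.2.1| ≤ N) (h₃ : |q.2.2| ≤ N) :
    (resonanceInvariant (cubeFreq q)).natAbs ≤ 3000 * N ^ 3 := by
  have hfactor {m k : ℤ} (hm : |m| ≤ N) (hk : |k| ≤ N) : (3 * (m + k) - 4).natAbs ≤ 10 * N := by
    rw [abs_le] at hm hk
    omega
  rw [resonanceInvariant_cubeFreq, Int.natAbs_mul, Int.natAbs_mul, Int.natAbs_mul]
  calc 3 * ((3 * (q.2.1 + q.2.2) - 4).natAbs * (3 * (q.1 + q.2.2) - 4).natAbs *
        (3 * (q.1 + q.2.1) - 4).natAbs)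
      ≤ 3 * (10 * N * (10 * N) * (10 * N)) := by
        gcongr <;> exact hfactor ‹_› ‹_›
    _ = 3000 * N ^ 3 := by ring

lemma exists_card_filter_cubeFreq_eq_le {η : ℝ} (hη : 0 < η) :
    ∃ C : ℝ, 0 < C ∧ ∀ N : ℕ, 1 ≤ N → ∀ (T : Finset (ℤ × ℤ × ℤ)) (p : ℤ × ℤ × ℤ),
      |p.1| ≤ N → |p.2.1| ≤ N → |p.2.2| ≤ N →
        (#{q ∈ T | cubeFreq p = cubeFreq q} : ℝ) ≤ C * (N : ℝ) ^ η := by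
  obtain ⟨C, hC, hdiv⟩ := exists_card_divisors_le_mul_rpow (by positivity : 0 < η / 6)
  refine ⟨4 * C ^ 2 * 3000 ^ (η / 3), by positivity, fun N hN T p h₁ h₂ h₃ => ?_⟩
  have hK : ((resonanceInvariant (cubeFreq p)).natAbs : ℝ) ≤ 3000 * (N : ℝ) ^ 3 := by
    exact_mod_cast natAbs_resonanceInvariant_cubeFreq_le hN h₁ h₂ h₃
  calc (#{q ∈ T | cubeFreq p = cubeFreq q} : ℝ)
      ≤ (#(resonanceInvariant (cubeFreq p)).divisors : ℝ) ^ 2 := by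
        exact_mod_cast card_filter_cubeFreq_eq_le T p
    _ = 4 * (#(resonanceInvariant (cubeFreq p)).natAbs.divisors : ℝ) ^ 2 := by
        rw [Int.card_divisors]; push_cast; ring
    _ ≤ 4 * (C * (3000 * (N : ℝ) ^ 3) ^ (η / 6)) ^ 2 := by
        gcongr
        exact (hdiv _).trans (by gcongr)
    _ = 4 * C ^ 2 * 3000 ^ (η / 3) * (N : ℝ) ^ η := by
        rw [mul_pow, ← Real.rpow_mul_natCast (by positivity), Real.mul_rpow (by positivity)
          (by positivity), ← Real.rpow_natCast_mul (by positivity)]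
        ring_nf

lemma sol_pow_three (a : ℤ →₀ ℂ) (x t : ℝ) :
    sol a x t ^ 3 = trigPoly (a.support ×ˢ a.support ×ˢ a.support)
      (fun q => a q.1 * a q.2.1 * a q.2.2) cubeFreq x t := by
  have hsol : sol a x t = trigPoly a.support a (fun n => (n, P n)) x t := rfl
  rw [pow_succ', sq, hsol, trigPoly_mul, trigPoly_mul]
  refine sum_congr rfl fun q _ => ?_
  simp only [cubeFreq, mul_assoc, Prod.mk_add_mk, add_assoc]

lemma sum_norm_sq_cube {ι : Type*} (s : Finset ι) (c : ι → ℂ) :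
    ∑ q ∈ s ×ˢ s ×ˢ s, ‖c q.1 * c q.2.1 * c q.2.2‖ ^ 2 = (∑ i ∈ s, ‖c i‖ ^ 2) ^ 3 := by
  simp only [norm_mul, mul_pow, sum_product, ← sum_mul, ← mul_sum]
  ring

lemma exists_torusIntegral_norm_sol_pow_six_le {η : ℝ} (hη : 0 < η) :
    ∃ C : ℝ, 0 < C ∧ ∀ N : ℕ, 1 ≤ N → ∀ a : ℤ →₀ ℂ, (∀ n ∈ a.support, |n| ≤ (N : ℤ)) →
      torusIntegral (fun x t => ‖sol a x t‖ ^ 6)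
        ≤ C * (N : ℝ) ^ η * (∑ n ∈ a.support, ‖a n‖ ^ 2) ^ 3 := by
  obtain ⟨C, hC, hfiber⟩ := exists_card_filter_cubeFreq_eq_le hη
  refine ⟨(2 * π) ^ 2 * C, by positivity, fun N hN a ha => ?_⟩
  have hcube (x t : ℝ) : ‖sol a x t‖ ^ 6 = ‖trigPoly (a.support ×ˢ a.support ×ˢ a.support)
      (fun q => a q.1 * a q.2.1 * a q.2.2) cubeFreq x t‖ ^ 2 := by
    rw [← sol_pow_three, norm_pow, ← pow_mul]
  simp only [hcube]
  refine (torusIntegral_norm_sq_trigPoly_le _ _ _ (C * (N : ℝ) ^ η) fun p hp => ?_).trans_eq ?_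
  · simp only [mem_product] at hp
    exact hfiber N hN _ p (ha _ hp.1) (ha _ hp.2.1) (ha _ hp.2.2)
  · rw [sum_norm_sq_cube]
    ring

lemma continuous_sol (a : ℤ →₀ ℂ) : Continuous (Function.uncurry (sol a)) :=
  continuous_trigPoly a.support a fun n => (n, P n)

lemma norm_sol_sq_le {N : ℕ} {a : ℤ →₀ ℂ} (ha : ∀ n ∈ a.support, |n| ≤ (N : ℤ)) (x t : ℝ) :
    ‖sol a x t‖ ^ 2 ≤ (2 * N + 1) * ∑ n ∈ a.support, ‖a n‖ ^ 2 := by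
  have hcard : (#a.support : ℝ) ≤ 2 * N + 1 := by
    have hsub : a.support ⊆ Icc (-(N : ℤ)) N := fun n hn => mem_Icc.mpr (abs_le.mp (ha n hn))
    have h := card_le_card hsub
    rw [Int.card_Icc] at h
    exact_mod_cast (by omega : #a.support ≤ 2 * N + 1)
  calc ‖sol a x t‖ ^ 2 ≤ (∑ n ∈ a.support, ‖a n‖) ^ 2 := by
        gcongr; exact norm_trigPoly_le a.support a (fun n => (n, P n)) x t
    _ ≤ #a.support * ∑ n ∈ a.support, ‖a n‖ ^ 2 := sq_sum_le_card_mul_sum_sq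
    _ ≤ (2 * N + 1) * ∑ n ∈ a.support, ‖a n‖ ^ 2 := by gcongr

lemma torusIntegral_norm_pow_le_of_norm_sq_le {E : Type*} [NormedAddCommGroup E]
    {u : ℝ → ℝ → E} (hu : Continuous (Function.uncurry u)) {B : ℝ}
    (hB : ∀ x t, ‖u x t‖ ^ 2 ≤ B) (k j : ℕ) :
    torusIntegral (fun x t => ‖u x t‖ ^ (2 * k + j))
      ≤ B ^ k * torusIntegral (fun x t => ‖u x t‖ ^ j) := by
  rw [← torusIntegral_const_mul]
  refine torusIntegral_mono (hu.norm.pow _) (continuous_const.mul (hu.norm.pow _)) fun x t => ?_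
  rw [pow_add, pow_mul]
  gcongr
  exact hB x t

lemma LpNorm_two_mul_le {m : ℕ} (hm : m ≠ 0) {u : ℝ → ℝ → ℂ} {K N T e : ℝ} (hK : 0 ≤ K)
    (hN : 0 ≤ N) (hT : 0 ≤ T)
    (h : torusIntegral (fun x t => ‖u x t‖ ^ (2 * m)) ≤ K * N ^ (2 * m * e) * T ^ m) :
    LpNorm (2 * m) u ≤ K ^ ((1 : ℝ) / (2 * m)) * N ^ e * T ^ ((1 : ℝ) / 2) := by
  have hnat (x t : ℝ) : ‖u x t‖ ^ (2 * (m : ℝ)) = ‖u x t‖ ^ (2 * m) := by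
    rw [← Real.rpow_natCast]; push_cast; rfl
  calc LpNorm (2 * m) u = torusIntegral (fun x t => ‖u x t‖ ^ (2 * m)) ^ ((1 : ℝ) / (2 * m)) := by
        simp only [LpNorm, hnat]; rfl
    _ ≤ (K * N ^ (2 * m * e) * T ^ m) ^ ((1 : ℝ) / (2 * m)) :=
        Real.rpow_le_rpow (torusIntegral_nonneg fun x t => by positivity) h (by positivity)
    _ = K ^ ((1 : ℝ) / (2 * m)) * N ^ e * T ^ ((1 : ℝ) / 2) := by
        rw [Real.mul_rpow (by positivity) (by positivity), Real.mul_rpow hK (by positivity),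
          ← Real.rpow_mul hN, ← Real.rpow_natCast T, ← Real.rpow_mul hT]
        have hN_exp : 2 * m * e * (1 / (2 * m)) = e := by field_simp
        have hT_exp : (m : ℝ) * (1 / (2 * m)) = 1 / 2 := by field_simp
        rw [hN_exp, hT_exp]

end Dysthe

open Dysthe

theorem stmt7 :
    ∀ m : ℕ, 3 ≤ m → ∀ ε : ℝ, 0 < ε → ∃ C : ℝ, 0 < C ∧
      ∀ (N : ℕ), 1 ≤ N → ∀ a : ℤ →₀ ℂ, (∀ n ∈ a.support, |n| ≤ (N : ℤ)) →
        LpNorm (2 * m) (sol a) ≤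
          C * (N : ℝ) ^ (((m : ℝ) - 3) / (2 * m) + ε) *
            (∑ n ∈ a.support, ‖a n‖ ^ 2) ^ ((1:ℝ) / 2) := by
  intro m hm ε hε
  obtain ⟨C, hC, hL6⟩ := exists_torusIntegral_norm_sol_pow_six_le (η := 2 * m * ε) (by positivity)
  refine ⟨(3 ^ (m - 3) * C) ^ ((1 : ℝ) / (2 * m)), by positivity, fun N hN a ha => ?_⟩
  set T := ∑ n ∈ a.support, ‖a n‖ ^ 2
  have hN₁ : (1 : ℝ) ≤ N := by exact_mod_cast hN
  have hT : 0 ≤ T := by positivity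
  refine LpNorm_two_mul_le (by omega) (by positivity) (by positivity) hT ?_
  calc torusIntegral (fun x t => ‖sol a x t‖ ^ (2 * m))
      = torusIntegral (fun x t => ‖sol a x t‖ ^ (2 * (m - 3) + 6)) := by
        rw [show 2 * m = 2 * (m - 3) + 6 by omega]
    _ ≤ ((2 * N + 1) * T) ^ (m - 3) * (C * (N : ℝ) ^ (2 * m * ε) * T ^ 3) :=
        (torusIntegral_norm_pow_le_of_norm_sq_le (continuous_sol a) (norm_sol_sq_le ha) _ _).trans
          (by gcongr; exact hL6 N hN a ha)
    _ ≤ (3 * N * T) ^ (m - 3) * (C * (N : ℝ) ^ (2 * m * ε) * T ^ 3) := by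
        gcongr
        nlinarith
    _ = 3 ^ (m - 3) * C * (N : ℝ) ^ (2 * m * (((m : ℝ) - 3) / (2 * m) + ε)) * T ^ m := by
        have hexp : 2 * m * (((m : ℝ) - 3) / (2 * m) + ε) = ((m - 3 : ℕ) : ℝ) + 2 * m * ε := by
          push_cast [Nat.cast_sub hm]
          field_simp
        rw [hexp, Real.rpow_add (by positivity), Real.rpow_natCast,
          ← Nat.sub_add_cancel hm, pow_add T, Nat.add_sub_cancel]
        ring
end
end
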